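/- Let {ρ_k}_{k∈K} be a finite ensemble of positive semidefinite operators on a finite-dimensional Hilbert space H with Σ_k Tr ρ_k = 1. Define the quadratically-weighted measurement M_k^{QW} = S^{-1/2⁺} ρ_k² S^{-1/2⁺}, where S = Σ_ℓ ρ_ℓ². Then {M_k^{QW}} is a POVM (each M_k^{QW} ≥ 0 and Σ_k M_k^{QW} ≤ 1) and its success probability satisfies Σ_k Tr(M_k^{QW} ρ_k) ≥ Λ², where Λ = Tr√S. -/

import Mathlib

/-!
Write `P = S^{-1/2⁺}`; it is `f(S)` for `f x = (√x)⁻¹`, which vanishes for `x ≤ 0`, so the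
functional calculus gives `P S = √S` and `1 - P S P = (1 - √x (√x)⁻¹)(S) ≥ 0`. Each
`M_k = P ρ_k² P` is positive and `∑ M_k = P S P ≤ 1`. For the success probability,
`Tr √S = Tr (P S) = ∑_k Tr (ρ_k P ρ_k)`. The Cauchy–Schwarz inequality for the semi-inner
product `⟪X, Y⟫ = Tr (Y ρ_k Xᴴ)`, applied to `X = (P ρ_k)ᴴ` and `Y = 1`, bounds the `k`-th term by
`(Tr ρ_k)^{1/2} (Tr (M_k ρ_k))^{1/2}`, and Cauchy–Schwarz over `k` with `∑ Tr ρ_k = 1` gives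
`(Tr √S)² ≤ ∑_k Tr (M_k ρ_k)`.
-/

open Matrix ComplexOrder

/-- The pseudo-inverse square root `B^{-1/2⁺}` of a Hermitian matrix `B`:
only strictly positive eigenvalues are inverted (since `(Real.sqrt λ)⁻¹ = 0` for `λ ≤ 0`). -/
noncomputable def pinvSqrt {n : Type*} [Fintype n] [DecidableEq n]
    {B : Matrix n n ℂ} (hB : B.IsHermitian) : Matrix n n ℂ :=
  (hB.eigenvectorUnitary : Matrix n n ℂ) *
    Matrix.diagonal (fun i => (((Real.sqrt (hB.eigenvalues i))⁻¹ : ℝ) : ℂ)) *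
    ((hB.eigenvectorUnitary : Matrix n n ℂ))ᴴ

/-- The positive semidefinite square root of a positive semidefinite matrix -/
noncomputable def Matrix.PosSemidef.sqrt {n : Type*} [Fintype n] {𝕜 : Type*} [RCLike 𝕜]
    [DecidableEq n] {A : Matrix n n 𝕜} (hA : A.PosSemidef) : Matrix n n 𝕜 :=
  hA.1.eigenvectorUnitary.1 * diagonal ((↑) ∘ (√·) ∘ hA.1.eigenvalues) *
    (star hA.1.eigenvectorUnitary : Matrix n n 𝕜)

namespace Matrix

variable {n : Type*} [Fintype n] [DecidableEq n]

theorem IsHermitian.pinvSqrt_eq_cfc {B : Matrix n n ℂ} (hB : B.IsHermitian) :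
    pinvSqrt hB = cfc (fun x : ℝ => (√x)⁻¹) B := by
  rw [hB.cfc_eq, IsHermitian.cfc, Unitary.conjStarAlgAut_apply]
  rfl

theorem PosSemidef.sqrt_eq_cfc {𝕜 : Type*} [RCLike 𝕜] {A : Matrix n n 𝕜} (hA : A.PosSemidef) :
    hA.sqrt = cfc Real.sqrt A := by
  rw [hA.1.cfc_eq, IsHermitian.cfc, Unitary.conjStarAlgAut_apply]
  rfl

theorem IsHermitian.pinvSqrt_isHermitian {B : Matrix n n ℂ} (hB : B.IsHermitian) :
    (pinvSqrt hB).IsHermitian := by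
  rw [hB.pinvSqrt_eq_cfc]
  exact cfc_predicate _ B

theorem IsHermitian.pinvSqrt_mul_self {B : Matrix n n ℂ} (hB : B.IsHermitian) :
    pinvSqrt hB * B = cfc Real.sqrt B := by
  have hB' : IsSelfAdjoint B := hB
  rw [hB.pinvSqrt_eq_cfc]
  nth_rw 2 [← cfc_id' ℝ B]
  rw [← cfc_mul _ _ B (B.finite_real_spectrum.continuousOn _)]
  congr 1
  funext x
  rw [← div_eq_inv_mul, Real.div_sqrt]

open scoped MatrixOrder in
theorem IsHermitian.posSemidef_one_sub_pinvSqrt_mul_mul_pinvSqrt {B : Matrix n n ℂ}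
    (hB : B.IsHermitian) : (1 - pinvSqrt hB * B * pinvSqrt hB).PosSemidef := by
  have hB' : IsSelfAdjoint B := hB
  have hcont (f : ℝ → ℝ) : ContinuousOn f (spectrum ℝ B) := B.finite_real_spectrum.continuousOn f
  rw [hB.pinvSqrt_mul_self, hB.pinvSqrt_eq_cfc, ← cfc_mul _ _ B (hcont _) (hcont _),
    ← cfc_const_one ℝ B, ← cfc_sub _ _ B (hcont _) (hcont _), ← nonneg_iff_posSemidef]
  exact cfc_nonneg fun x _ => sub_nonneg.mpr mul_inv_le_one

theorem PosSemidef.re_trace_mul_sq_le {𝕜 : Type*} [RCLike 𝕜] {M : Matrix n n 𝕜}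
    (hM : M.PosSemidef) (A : Matrix n n 𝕜) :
    RCLike.re (M * A).trace ^ 2 ≤ RCLike.re M.trace * RCLike.re (Aᴴ * M * A).trace := by
  let := M.toMatrixSeminormedAddCommGroup hM
  let := M.toMatrixInnerProductSpace hM
  have h := inner_mul_inner_self_le (𝕜 := 𝕜) (1 : Matrix n n 𝕜) Aᴴ
  rw [← norm_inner_symm (𝕜 := 𝕜) Aᴴ] at h
  change ‖(1 * M * Aᴴᴴ).trace‖ * ‖(1 * M * Aᴴᴴ).trace‖ ≤
    RCLike.re (1 * M * 1ᴴ).trace * RCLike.re (Aᴴ * M * Aᴴᴴ).trace at h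
  simp only [conjTranspose_one, mul_one, one_mul, conjTranspose_conjTranspose] at h
  nlinarith [RCLike.abs_re_le_norm (M * A).trace, sq_abs (RCLike.re (M * A).trace),
    abs_nonneg (RCLike.re (M * A).trace)]

theorem IsHermitian.sq_re_sum_trace_mul_sq_le {𝕜 K : Type*} [RCLike 𝕜] [Fintype K]
    {P : Matrix n n 𝕜} (hP : P.IsHermitian) {ρ : K → Matrix n n 𝕜}
    (hρ : ∀ k, (ρ k).PosSemidef) :
    RCLike.re (∑ k, (P * ρ k ^ 2).trace) ^ 2 ≤
      RCLike.re (∑ k, (ρ k).trace) * RCLike.re (∑ k, (P * ρ k ^ 2 * P * ρ k).trace) := by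
  have h_left (k : K) : (P * ρ k ^ 2).trace = (ρ k * (P * ρ k)).trace := by
    rw [trace_mul_comm (ρ k), mul_assoc, sq]
  have h_right (k : K) :
      (P * ρ k ^ 2 * P * ρ k).trace = ((P * ρ k)ᴴ * ρ k * (P * ρ k)).trace := by
    rw [conjTranspose_mul, hP.eq, (hρ k).isHermitian.eq, sq]
    simp only [mul_assoc]
    rw [trace_mul_comm P]
    simp only [mul_assoc]
    rw [trace_mul_comm (ρ k)]
    simp only [mul_assoc]
  simp only [map_sum, h_left, h_right]
  refine Finset.sum_sq_le_sum_mul_sum_of_sq_le_mul _ (fun k _ => ?_) (fun k _ => ?_)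
    (fun k _ => (hρ k).re_trace_mul_sq_le _)
  · exact (RCLike.nonneg_iff.mp (hρ k).trace_nonneg).1
  · exact (RCLike.nonneg_iff.mp ((hρ k).conjTranspose_mul_mul_same _).trace_nonneg).1

end Matrix

/-- The quadratically-weighted measurement `M_k^{QW} = S^{-1/2⁺} ρ_k² S^{-1/2⁺}`,
with `S = Σ_ℓ ρ_ℓ²`, is a POVM, and its success probability is at least
`Λ² = (Tr √S)²`. -/
theorem quadratically_weighted_measurement_bound
    {n K : Type*} [Fintype n] [DecidableEq n] [Fintype K]
    (ρ : K → Matrix n n ℂ) (hρ : ∀ k, (ρ k).PosSemidef)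
    (hnorm : (∑ k, (ρ k).trace) = 1)
    (hS : (∑ k, (ρ k) ^ 2).PosSemidef) :
    (∀ k, (pinvSqrt hS.isHermitian * (ρ k) ^ 2 * pinvSqrt hS.isHermitian).PosSemidef) ∧
    ((1 : Matrix n n ℂ) -
        ∑ k, pinvSqrt hS.isHermitian * (ρ k) ^ 2 * pinvSqrt hS.isHermitian).PosSemidef ∧
    (hS.sqrt.trace.re) ^ 2 ≤
      (∑ k, (pinvSqrt hS.isHermitian * (ρ k) ^ 2 * pinvSqrt hS.isHermitian *
        (ρ k)).trace).re := by
  set P := pinvSqrt hS.isHermitian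
  have hP : P.IsHermitian := hS.isHermitian.pinvSqrt_isHermitian
  have h_sum : ∑ k, P * ρ k ^ 2 * P = P * (∑ k, ρ k ^ 2) * P := by
    rw [Finset.mul_sum, Finset.sum_mul]
  have h_trace : ∑ k, (P * ρ k ^ 2).trace = hS.sqrt.trace := by
    rw [← trace_sum, ← Finset.mul_sum, hS.isHermitian.pinvSqrt_mul_self, hS.sqrt_eq_cfc]
  refine ⟨fun k => ?_, ?_, ?_⟩
  · simpa only [hP.eq] using ((hρ k).pow 2).mul_mul_conjTranspose_same P
  · rw [h_sum]
    exact hS.isHermitian.posSemidef_one_sub_pinvSqrt_mul_mul_pinvSqrt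
  · simpa only [h_trace, hnorm, RCLike.one_re, one_mul, RCLike.re_to_complex] using
      hP.sq_re_sum_trace_mul_sq_le hρ
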